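/- Twisted Kloosterman sum factorization: for all integers m, n and every positive integer c, S(m,n;c)·e(-(m+n)/c) = ∑_{ab=c} ∑_{x mod b, (x(x+a),b)=1} e((x̄·m − (x+a)^{−1}·n)/b), where S(m,n;c) = ∑*_{x mod c} e((mx + nx̄)/c) is the Kloosterman sum, x̄ denotes the inverse of x modulo b, and e(t) = exp(2πit). -/

import Mathlib

open Finset
open scoped Classical

noncomputable def e (x : ℝ) : ℂ := Complex.exp (2 * Real.pi * Complex.I * x)

/-- The Kloosterman sum `S(m,n;c) = ∑*_{x mod c} e((m x + n x̄)/c)`. -/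
noncomputable def kloosterman (c : ℕ) (m n : ℤ) : ℂ :=
  if h : c = 0 then 0 else
    letI : NeZero c := ⟨h⟩
    ∑ x : ZMod c, if IsUnit x then
      e ((((m : ZMod c) * x + (n : ZMod c) * x⁻¹).val : ℝ) / (c : ℝ)) else 0

/-- The inner sum `∑_{x mod b, (x(x+a),b)=1} e((x̄ m − (x+a)^{-1} n)/b)`. -/
noncomputable def innerSum (b : ℕ) (a m n : ℤ) : ℂ :=
  if h : b = 0 then 0 else
    letI : NeZero b := ⟨h⟩
    ∑ x : ZMod b, if IsUnit (x * (x + (a : ZMod b))) then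
      e (((x⁻¹ * (m : ZMod b) - (x + (a : ZMod b))⁻¹ * (n : ZMod b)).val : ℝ) / (b : ℝ)) else 0

lemma e_add (x y : ℝ) : e (x + y) = e x * e y := by
  unfold e; rw [← Complex.exp_add]; push_cast; ring_nf

lemma e_int (k : ℤ) : e k = 1 := by
  unfold e; rw [← Complex.exp_int_mul_two_pi_mul_I k]; congr 1; push_cast; ring

lemma e_congr {c : ℕ} (hc : c ≠ 0) {j k : ℤ} (h : (j : ZMod c) = (k : ZMod c)) :
    e ((j : ℝ) / c) = e ((k : ℝ) / c) := by
  rw [ZMod.intCast_eq_intCast_iff] at h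
  obtain ⟨t, ht⟩ := h.dvd
  have hcr : (c : ℝ) ≠ 0 := Nat.cast_ne_zero.2 hc
  have harg : (k : ℝ) / c = (j : ℝ) / c + (t : ℤ) := by
    have hk : (k : ℝ) = j + c * t := by
      have : (k : ℝ) - j = c * t := by exact_mod_cast congrArg (Int.cast : ℤ → ℝ) ht
      linarith
    rw [hk]; field_simp
  rw [harg, e_add, e_int, mul_one]

lemma sum_zmod_range {b : ℕ} [NeZero b] (f : ZMod b → ℂ) :
    ∑ x : ZMod b, f x = ∑ x ∈ Finset.range b, f (x : ZMod b) := by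
  refine Finset.sum_nbij' (fun x => ZMod.val x) (fun x => (x : ZMod b)) ?_ ?_ ?_ ?_ ?_
  · intro a _; exact Finset.mem_range.2 (ZMod.val_lt a)
  · intro a _; exact Finset.mem_univ _
  · intro a _; exact ZMod.natCast_rightInverse a
  · intro a ha; exact ZMod.val_cast_of_lt (Finset.mem_range.1 ha)
  · intro a _; rw [ZMod.natCast_rightInverse a]

lemma zmod_inv_inv {b : ℕ} (X : ZMod b) (h : IsUnit X) : X⁻¹⁻¹ = X :=
  ZMod.inv_eq_of_mul_eq_one b X⁻¹ X (ZMod.inv_mul_of_unit X h)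

lemma lift_cong (a b : ℕ) (k₁ k₂ : ℤ) (h : (k₁ : ZMod b) = (k₂ : ZMod b)) :
    ((a * k₁ : ℤ) : ZMod (a * b)) = ((a * k₂ : ℤ) : ZMod (a * b)) := by
  rw [ZMod.intCast_eq_intCast_iff] at h ⊢
  obtain ⟨t, ht⟩ := h.dvd
  rw [Int.modEq_iff_dvd]
  exact ⟨t, by push_cast; rw [← mul_sub, ht]; ring⟩

lemma kloosterman_eq (c : ℕ) [NeZero c] (m n : ℤ) :
    kloosterman c m n = ∑ x ∈ Finset.range c, (if IsUnit ((x : ℕ) : ZMod c) then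
      e ((((m : ZMod c) * ((x : ℕ) : ZMod c) + (n : ZMod c) * ((x : ℕ) : ZMod c)⁻¹).val : ℝ) / (c : ℝ)) else 0) := by
  rw [kloosterman, dif_neg (NeZero.ne c)]
  exact sum_zmod_range _

lemma innerSum_eq (b : ℕ) [NeZero b] (a : ℕ) (m n : ℤ) :
    innerSum b (a : ℤ) m n = ∑ x ∈ Finset.range b,
      (if IsUnit (((x : ℕ) : ZMod b) * (((x : ℕ) : ZMod b) + (a : ZMod b))) then
      e (((((x : ℕ) : ZMod b)⁻¹ * (m : ZMod b) - (((x : ℕ) : ZMod b) + (a : ZMod b))⁻¹ * (n : ZMod b)).val : ℝ) / (b : ℝ)) else 0) := by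
  rw [innerSum, dif_neg (NeZero.ne b)]
  rw [sum_zmod_range]
  apply Finset.sum_congr rfl
  intro x _
  norm_cast

lemma gcd_mod_left (t c : ℕ) : Nat.gcd (t % c) c = Nat.gcd t c := by
  conv_rhs => rw [Nat.gcd_comm, Nat.gcd_rec]

section aux
variable {a b c x : ℕ}

lemma fwd_k (hab : a * b = c) (ha : a ≠ 0) (hb : b ≠ 0) {u : ℕ} (hu : u < b) :
    ∃ k, (1 + a * u) % c + c - 1 = a * u + c * k := by
  have hc : c ≠ 0 := by rw [← hab]; positivity
  have hle : 1 + a * u ≤ c := by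
    have h1 : a * u + a ≤ a * b := by
      calc a * u + a = a * (u + 1) := by ring
      _ ≤ a * b := Nat.mul_le_mul_left a (by omega)
    omega
  rcases lt_or_eq_of_le hle with h | h
  · exact ⟨1, by rw [Nat.mod_eq_of_lt h]; omega⟩
  · exact ⟨0, by rw [h, Nat.mod_self]; omega⟩

lemma fwd_gcd (hab : a * b = c) (ha : a ≠ 0) (hb : b ≠ 0) {u : ℕ} (hu : u < b)
    (hcop : Nat.Coprime u b) :
    Nat.gcd ((1 + a * u) % c + c - 1) c = a := by
  obtain ⟨k, hk⟩ := fwd_k hab ha hb hu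
  rw [hk]
  have h1 : Nat.gcd (a * u + c * k) c = Nat.gcd (a * u) c := by
    conv_lhs => rw [Nat.gcd_comm, Nat.gcd_rec]
    conv_rhs => rw [Nat.gcd_comm, Nat.gcd_rec]
    rw [Nat.add_mul_mod_self_left]
  rw [h1, ← hab, Nat.gcd_mul_left, hcop, mul_one]

lemma fwd_w (hab : a * b = c) (ha : a ≠ 0) (hb : b ≠ 0) {u : ℕ} (hu : u < b) :
    ((((1 + a * u) % c + c - 1) / a : ℕ) : ZMod b) = ((u : ℕ) : ZMod b) := by
  obtain ⟨k, hk⟩ := fwd_k hab ha hb hu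
  have h2 : (1 + a * u) % c + c - 1 = a * (u + b * k) := by rw [hk, ← hab]; ring
  rw [h2, Nat.mul_div_cancel_left _ (Nat.pos_of_ne_zero ha)]
  push_cast
  simp [ZMod.natCast_self]

lemma fwd_coprime (hab : a * b = c) (ha : a ≠ 0) (hb : b ≠ 0)
    (hU : IsUnit (((x : ℕ) : ZMod b) * (((x : ℕ) : ZMod b) + (a : ZMod b)))) :
    Nat.Coprime (1 + a * ((((x : ℕ) : ZMod b))⁻¹).val) c := by
  haveI : NeZero b := ⟨hb⟩
  set X : ZMod b := ((x : ℕ) : ZMod b) with hX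
  have hXu : IsUnit X := isUnit_of_mul_isUnit_left hU
  have hXa : IsUnit (X + a) := isUnit_of_mul_isUnit_right hU
  have h1 : X⁻¹ * X = 1 := ZMod.inv_mul_of_unit X hXu
  have hXinv : IsUnit X⁻¹ := IsUnit.of_mul_eq_one _ h1
  set u : ℕ := (X⁻¹).val with hudef
  have hucast : ((u : ℕ) : ZMod b) = X⁻¹ := ZMod.natCast_rightInverse _
  have cop_a : Nat.Coprime (1 + a * u) a := by
    rw [Nat.coprime_add_mul_left_left]
    exact Nat.coprime_one_left a
  have cop_b : Nat.Coprime (1 + a * u) b := by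
    rw [← ZMod.isUnit_iff_coprime]
    have : ((1 + a * u : ℕ) : ZMod b) = X⁻¹ * (X + a) := by
      push_cast
      rw [hucast]
      linear_combination -h1
    rw [this]
    exact hXinv.mul hXa
  rw [← hab]
  exact Nat.Coprime.mul_right cop_a cop_b

lemma bwd_facts (hc : c ≠ 0) {y : ℕ} (hcop : Nat.Coprime y c) :
    let g := Nat.gcd (y + c - 1) c
    let b := c / g
    let w := (y + c - 1) / g
    g * b = c ∧ g ≠ 0 ∧ b ≠ 0 ∧ Nat.Coprime w b ∧ g * w = y + c - 1 ∧ Nat.Coprime y b := by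
  intro g b w
  have hgc : g ∣ c := Nat.gcd_dvd_right _ _
  have hg0 : g ≠ 0 := fun h => hc (Nat.eq_zero_of_gcd_eq_zero_right h)
  have hgb : g * b = c := Nat.mul_div_cancel' hgc
  have hb0 : b ≠ 0 := by intro h; rw [h, mul_zero] at hgb; exact hc hgb.symm
  have hwb : Nat.Coprime w b := Nat.coprime_div_gcd_div_gcd (Nat.pos_of_ne_zero hg0)
  have hgw : g * w = y + c - 1 := Nat.mul_div_cancel' (Nat.gcd_dvd_left _ _)
  have hbc : b ∣ c := ⟨g, by rw [mul_comm, hgb]⟩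
  exact ⟨hgb, hg0, hb0, hwb, hgw, Nat.Coprime.coprime_dvd_right hbc hcop⟩

end aux

section aux3
variable {a b x : ℕ}

lemma value_eq (ha : a ≠ 0) (hb : b ≠ 0) (m n : ℤ)
    (hU : IsUnit (((x : ℕ) : ZMod b) * (((x : ℕ) : ZMod b) + (a : ZMod b)))) :
    e ((((((x : ℕ) : ZMod b)⁻¹ * (m : ZMod b) - (((x : ℕ) : ZMod b) + (a : ZMod b))⁻¹ * (n : ZMod b)).val : ℕ) : ℝ) / b)
    = e (((((((m : ZMod (a*b)) * ((((1 + a * ((((x : ℕ) : ZMod b))⁻¹).val) % (a*b) : ℕ) : ZMod (a*b))) +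
          (n : ZMod (a*b)) * ((((1 + a * ((((x : ℕ) : ZMod b))⁻¹).val) % (a*b) : ℕ) : ZMod (a*b)))⁻¹).val : ℕ) : ℤ) - (m + n) : ℤ) : ℝ) / ((a*b : ℕ) : ℝ)) := by
  haveI : NeZero b := ⟨hb⟩
  have hc : a * b ≠ 0 := by positivity
  haveI : NeZero (a*b) := ⟨hc⟩
  set X : ZMod b := ((x : ℕ) : ZMod b) with hXdef
  have hXu : IsUnit X := isUnit_of_mul_isUnit_left hU
  have hXa : IsUnit (X + a) := isUnit_of_mul_isUnit_right hU
  have h1 : X * X⁻¹ = 1 := ZMod.mul_inv_of_unit X hXu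
  have h2 : (X + a) * (X + a)⁻¹ = 1 := ZMod.mul_inv_of_unit _ hXa
  set u : ℕ := (X⁻¹).val with hudef
  set v : ℕ := ((X + (a : ZMod b))⁻¹).val with hvdef
  have hu : ((u : ℕ) : ZMod b) = X⁻¹ := ZMod.natCast_rightInverse _
  have hv : ((v : ℕ) : ZMod b) = (X + a)⁻¹ := ZMod.natCast_rightInverse _
  set V : ℕ := (X⁻¹ * (m : ZMod b) - (X + (a : ZMod b))⁻¹ * (n : ZMod b)).val with hVdef
  have hV : ((V : ℕ) : ZMod b) = X⁻¹ * (m : ZMod b) - (X + (a : ZMod b))⁻¹ * (n : ZMod b) :=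
    ZMod.natCast_rightInverse _
  set y : ℕ := (1 + a * u) % (a*b) with hydef
  set Yc : ZMod (a*b) := ((y : ℕ) : ZMod (a*b)) with hYcdef
  set W : ℕ := ((m : ZMod (a*b)) * Yc + (n : ZMod (a*b)) * Yc⁻¹).val with hWdef
  have hW : ((W : ℕ) : ZMod (a*b)) = (m : ZMod (a*b)) * Yc + (n : ZMod (a*b)) * Yc⁻¹ :=
    ZMod.natCast_rightInverse _
  have step1 : e ((V : ℝ) / b) = e ((((a : ℤ) * (V : ℤ) : ℤ) : ℝ) / ((a*b : ℕ) : ℝ)) := by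
    congr 1
    have har : (a : ℝ) ≠ 0 := Nat.cast_ne_zero.2 ha
    push_cast
    rw [mul_div_mul_left _ _ har]
  rw [step1]
  apply e_congr hc
  have hVb : ((V : ℤ) : ZMod b) = (((u : ℤ) * m - (v : ℤ) * n : ℤ) : ZMod b) := by
    push_cast
    rw [hV, hu, hv]
  have H1 := lift_cong a b (V : ℤ) ((u : ℤ) * m - (v : ℤ) * n) hVb
  have hY : Yc = ((1 + a * u : ℕ) : ZMod (a*b)) := ZMod.natCast_mod _ _
  have hzb : (((u : ℤ) - v - a * u * v : ℤ) : ZMod b) = 0 := by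
    push_cast
    rw [hu, hv]
    linear_combination (X + (a : ZMod b))⁻¹ * h1 - X⁻¹ * h2
  obtain ⟨t, ht⟩ := (ZMod.intCast_zmod_eq_zero_iff_dvd _ b).1 hzb
  have hdvd : ((a*b : ℕ) : ℤ) ∣ ((1 + (a:ℤ)*u) * (1 - (a:ℤ)*v) - 1) :=
    ⟨t, by push_cast; linear_combination (a:ℤ) * ht⟩
  have h3 : (((1 + (a:ℤ)*u) * (1 - (a:ℤ)*v) - 1 : ℤ) : ZMod (a*b)) = 0 :=
    (ZMod.intCast_zmod_eq_zero_iff_dvd _ _).2 hdvd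
  have hprod : Yc * ((1 - (a:ℤ)*v : ℤ) : ZMod (a*b)) = 1 := by
    rw [hY]
    push_cast at h3 ⊢
    linear_combination h3
  have hYinv : Yc⁻¹ = ((1 - (a:ℤ)*v : ℤ) : ZMod (a*b)) :=
    ZMod.inv_eq_of_mul_eq_one _ _ _ hprod
  rw [H1]
  push_cast
  rw [hW, hYinv, hY]
  push_cast
  ring

end aux3

noncomputable def fwdMap (c : ℕ) : (Σ _ : ℕ × ℕ, ℕ) → ℕ :=
  fun q => (1 + q.1.1 * ((((q.2 : ℕ) : ZMod q.1.2))⁻¹).val) % c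

noncomputable def bwdMap (c : ℕ) : ℕ → (Σ _ : ℕ × ℕ, ℕ) :=
  fun y => ⟨(Nat.gcd (y + c - 1) c, c / Nat.gcd (y + c - 1) c),
   (((((y + c - 1) / Nat.gcd (y + c - 1) c : ℕ) : ZMod (c / Nat.gcd (y + c - 1) c)))⁻¹).val⟩

set_option maxHeartbeats 2000000 in
theorem stmt3 (m n : ℤ) (c : ℕ) (hc : 0 < c) :
    kloosterman c m n * e ((-(m + n) : ℝ) / (c : ℝ))
    = ∑ p ∈ Nat.divisorsAntidiagonal c, innerSum p.2 (p.1 : ℤ) m n := by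
  have hc' : c ≠ 0 := hc.ne'
  haveI : NeZero c := ⟨hc'⟩
  have hL : kloosterman c m n * e ((-(m + n) : ℝ) / (c : ℝ))
      = ∑ y ∈ (Finset.range c).filter (fun y => IsUnit ((y : ℕ) : ZMod c)),
          e (((((((m : ZMod c) * ((y : ℕ) : ZMod c) + (n : ZMod c) * ((y : ℕ) : ZMod c)⁻¹).val : ℕ) : ℤ) - (m + n) : ℤ) : ℝ) / (c : ℝ)) := by
    rw [kloosterman_eq, Finset.sum_mul, Finset.sum_filter]
    apply Finset.sum_congr rfl
    intro y _
    rw [ite_mul, zero_mul]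
    split
    · rw [← e_add]
      congr 1
      push_cast
      ring
    · rfl
  have hR : ∑ p ∈ Nat.divisorsAntidiagonal c, innerSum p.2 (p.1 : ℤ) m n
      = ∑ q ∈ ((Nat.divisorsAntidiagonal c).sigma (fun p => Finset.range p.2)).filter
            (fun q => IsUnit (((q.2 : ℕ) : ZMod q.1.2) * (((q.2 : ℕ) : ZMod q.1.2) + (q.1.1 : ZMod q.1.2)))),
          e ((((((q.2 : ℕ) : ZMod q.1.2)⁻¹ * (m : ZMod q.1.2) - (((q.2 : ℕ) : ZMod q.1.2) + (q.1.1 : ZMod q.1.2))⁻¹ * (n : ZMod q.1.2)).val : ℕ) : ℝ) / (q.1.2 : ℝ)) := by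
    rw [Finset.sum_filter]
    rw [Finset.sum_sigma]
    apply Finset.sum_congr rfl
    intro p hp
    have hp' := (Nat.mem_divisorsAntidiagonal.1 hp)
    have hb : p.2 ≠ 0 := by
      intro h
      rw [h, mul_zero] at hp'
      exact hp'.2 hp'.1.symm
    haveI : NeZero p.2 := ⟨hb⟩
    rw [innerSum_eq p.2 p.1 m n]
    apply Finset.sum_congr rfl
    intro x _
    congr 1
  rw [hL, hR]
  symm
  refine Finset.sum_nbij' (fwdMap c) (bwdMap c) ?_ ?_ ?_ ?_ ?_
  · -- fwd maps into y-set
    rintro ⟨⟨a, b⟩, x⟩ hq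
    simp only [Finset.mem_filter, Finset.mem_sigma, Finset.mem_range,
      Nat.mem_divisorsAntidiagonal] at hq
    obtain ⟨⟨⟨hab, -⟩, hx⟩, hU⟩ := hq
    have ha : a ≠ 0 := fun h => hc' (by rw [← hab, h, zero_mul])
    have hb : b ≠ 0 := fun h => hc' (by rw [← hab, h, mul_zero])
    simp only [fwdMap, Finset.mem_filter, Finset.mem_range]
    constructor
    · exact Nat.mod_lt _ hc
    · rw [ZMod.isUnit_iff_coprime, Nat.Coprime, gcd_mod_left]
      exact fwd_coprime hab ha hb hU
  · -- bwd maps into q-set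
    intro y hy
    simp only [Finset.mem_filter, Finset.mem_range] at hy
    obtain ⟨hylt, hyu⟩ := hy
    have hycop : Nat.Coprime y c := (ZMod.isUnit_iff_coprime y c).1 hyu
    obtain ⟨hgb, hg0, hb0, hwb, hgw, hyb⟩ := bwd_facts hc' hycop
    simp only [bwdMap, Finset.mem_filter, Finset.mem_sigma, Finset.mem_range,
      Nat.mem_divisorsAntidiagonal]
    set g := Nat.gcd (y + c - 1) c with hgdef
    set b := c / g with hbdef
    set w := (y + c - 1) / g with hwdef
    haveI : NeZero b := ⟨hb0⟩
    refine ⟨⟨⟨hgb, hc'⟩, ZMod.val_lt _⟩, ?_⟩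
    set Xw : ZMod b := ((w : ℕ) : ZMod b) with hXwdef
    have hXw : IsUnit Xw := (ZMod.isUnit_iff_coprime w b).2 hwb
    have hinv : Xw⁻¹ * Xw = 1 := ZMod.inv_mul_of_unit _ hXw
    have hXwi : IsUnit Xw⁻¹ := IsUnit.of_mul_eq_one _ hinv
    have hcast : (((Xw⁻¹).val : ℕ) : ZMod b) = Xw⁻¹ := ZMod.natCast_rightInverse _
    rw [hcast]
    have h4 : 1 + g * w = y + c := by rw [hgw]; omega
    have hyunit_b : IsUnit ((y : ℕ) : ZMod b) := (ZMod.isUnit_iff_coprime y b).2 hyb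
    have h5 : Xw⁻¹ + (g : ZMod b) = Xw⁻¹ * ((y : ℕ) : ZMod b) := by
      have h6 : ((y : ℕ) : ZMod b) = 1 + (g : ZMod b) * Xw := by
        have h7 : ((y + c : ℕ) : ZMod b) = ((1 + g * w : ℕ) : ZMod b) := by rw [h4]
        have hcb : ((c : ℕ) : ZMod b) = 0 := by
          rw [← hgb]; push_cast; rw [ZMod.natCast_self, mul_zero]
        push_cast at h7
        rw [hcb, add_zero] at h7
        rw [h7]
      rw [h6]
      linear_combination -(g : ZMod b) * hinv
    rw [h5]
    exact hXwi.mul (hXwi.mul hyunit_b)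
  · -- bwd ∘ fwd = id
    rintro ⟨⟨a, b⟩, x⟩ hq
    simp only [Finset.mem_filter, Finset.mem_sigma, Finset.mem_range,
      Nat.mem_divisorsAntidiagonal] at hq
    obtain ⟨⟨⟨hab, -⟩, hx⟩, hU⟩ := hq
    have ha : a ≠ 0 := fun h => hc' (by rw [← hab, h, zero_mul])
    have hb : b ≠ 0 := fun h => hc' (by rw [← hab, h, mul_zero])
    haveI : NeZero b := ⟨hb⟩
    set X : ZMod b := ((x : ℕ) : ZMod b) with hXdef
    have hXu : IsUnit X := isUnit_of_mul_isUnit_left hU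
    have h1 : X⁻¹ * X = 1 := ZMod.inv_mul_of_unit X hXu
    have hXinvU : IsUnit X⁻¹ := IsUnit.of_mul_eq_one _ h1
    set u : ℕ := (X⁻¹).val with hudef
    have hucast : ((u : ℕ) : ZMod b) = X⁻¹ := ZMod.natCast_rightInverse _
    have hul : u < b := ZMod.val_lt _
    have hcopu : Nat.Coprime u b := (ZMod.isUnit_iff_coprime u b).1 (by rw [hucast]; exact hXinvU)
    unfold fwdMap bwdMap
    have hg : Nat.gcd ((1 + a * u) % c + c - 1) c = a := fwd_gcd hab ha hb hul hcopu
    rw [hg]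
    have hca : c / a = b := by rw [← hab]; exact Nat.mul_div_cancel_left b (Nat.pos_of_ne_zero ha)
    rw [hca]
    have hw := fwd_w hab ha hb hul
    rw [hw, hucast, zmod_inv_inv X hXu, ZMod.val_cast_of_lt hx]
  · -- fwd ∘ bwd = id
    intro y hy
    simp only [Finset.mem_filter, Finset.mem_range] at hy
    obtain ⟨hylt, hyu⟩ := hy
    have hycop : Nat.Coprime y c := (ZMod.isUnit_iff_coprime y c).1 hyu
    obtain ⟨hgb, hg0, hb0, hwb, hgw, hyb⟩ := bwd_facts hc' hycop
    unfold fwdMap bwdMap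
    set g := Nat.gcd (y + c - 1) c with hgdef
    set b := c / g with hbdef
    set w := (y + c - 1) / g with hwdef
    haveI : NeZero b := ⟨hb0⟩
    set Xw : ZMod b := ((w : ℕ) : ZMod b) with hXwdef
    have hXw : IsUnit Xw := (ZMod.isUnit_iff_coprime w b).2 hwb
    have hcast : (((Xw⁻¹).val : ℕ) : ZMod b) = Xw⁻¹ := ZMod.natCast_rightInverse _
    rw [hcast, zmod_inv_inv _ hXw, ZMod.val_natCast]
    have h4 : 1 + g * w = y + c := by rw [hgw]; omega
    have hmeq : (1 + g * (w % b)) % c = (1 + g * w) % c := by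
      have h7 : (w % b) ≡ w [MOD b] := Nat.mod_modEq w b
      have h8 := Nat.ModEq.mul_left' (c := g) h7
      rw [hgb] at h8
      exact Nat.ModEq.add_left 1 h8
    rw [hmeq, h4, Nat.add_mod_right, Nat.mod_eq_of_lt hylt]
  · -- value equality
    rintro ⟨⟨a, b⟩, x⟩ hq
    simp only [Finset.mem_filter, Finset.mem_sigma, Finset.mem_range,
      Nat.mem_divisorsAntidiagonal] at hq
    obtain ⟨⟨⟨hab, -⟩, hx⟩, hU⟩ := hq
    have ha : a ≠ 0 := fun h => hc' (by rw [← hab, h, zero_mul])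
    have hb : b ≠ 0 := fun h => hc' (by rw [← hab, h, mul_zero])
    subst hab
    simp only [fwdMap]
    exact value_eq ha hb m n hU
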